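/- arXiv:2008.06558 — 13 statements merged into one kernel-verified Lean document; each statement's English description precedes it below -/
import Mathlib

section
/- For integers q = p^r (p prime, r ≥ 1) and 0 ≤ t < q, define h_t^{(q)}(x) = ∑_{k=t}^{q-1} (-1)^{k-t} C(k,t) C(x,k). Then for every integer m, h_t^{(q)}(m) ≡ 1 (mod p) if m ≡ t (mod q), and h_t^{(q)}(m) ≡ 0 (mod p) otherwise. -/
/-!
For `k < q = p^r`, Vandermonde's identity `C(m+q,k) = ∑ C(m,i) C(q,k-i)` together with
`p ∣ C(q,j)` for `0 < j < q` shows that `m ↦ C(m,k) mod p` is `q`-periodic. Hence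
`h_t(m) ≡ h_t(m₀)` with `m₀ = m mod q ∈ [0, q)`, and there `h_t(m₀) = δ_{m₀,t}` exactly:
`C(k,t) C(m₀,k) = C(m₀,t) C(m₀-t,k-t)` turns the sum into an alternating row sum of Pascal's
triangle.
-/

open Finset

theorem Ring.choose_add_natCast_modEq {n q k : ℕ} (hdvd : ∀ j ∈ Icc 1 k, n ∣ q.choose j)
    (m : ℤ) : Ring.choose (m + q) k ≡ Ring.choose m k [ZMOD n] := by
  rw [Ring.add_choose_eq k (Commute.all _ _)]
  refine (Int.sum_modEq_single (a := (k, 0)) (fun h => absurd (by simp) h) ?_).trans (by simp)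
  rintro ⟨i, j⟩ hij hne
  rw [HasAntidiagonal.mem_antidiagonal] at hij
  have hj : j ∈ Icc 1 k := by
    simp only [ne_eq, Prod.mk.injEq, not_and] at hne
    simp only [mem_Icc]
    omega
  rw [Ring.choose_natCast, Int.modEq_zero_iff_dvd]
  exact dvd_mul_of_dvd_right (Int.natCast_dvd_natCast.mpr (hdvd j hj)) _

theorem Ring.choose_emod_modEq {n q k : ℕ} (hdvd : ∀ j ∈ Icc 1 k, n ∣ q.choose j) (m : ℤ) :
    Ring.choose (m % q) k ≡ Ring.choose m k [ZMOD n] := by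
  have hper : Function.Periodic (fun x : ℤ => ((Ring.choose x k : ℤ) : ZMod n)) q := fun x =>
    (ZMod.intCast_eq_intCast_iff _ _ n).mpr (Ring.choose_add_natCast_modEq hdvd x)
  rw [← ZMod.intCast_eq_intCast_iff, Int.emod_def, mul_comm]
  exact hper.sub_int_mul_eq (m / q)

theorem Int.alternating_sum_range_choose_of_lt {n L : ℕ} (hL : n < L) :
    ∑ i ∈ Finset.range L, ((-1) ^ i * n.choose i : ℤ) = if n = 0 then 1 else 0 := by
  obtain ⟨d, rfl⟩ := Nat.exists_eq_add_of_le hL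
  rw [sum_range_add, Int.alternating_sum_range_choose, add_eq_left]
  exact sum_eq_zero fun i _ => by rw [Nat.choose_eq_zero_of_lt (by omega)]; simp

theorem Int.sum_Icc_alternating_choose_mul_choose {t N m : ℕ} (hm : m ≤ N) :
    ∑ k ∈ Icc t N, (-1 : ℤ) ^ (k - t) * k.choose t * m.choose k = if m = t then 1 else 0 := by
  have hterm : ∀ i ∈ Finset.range (N + 1 - t), (-1 : ℤ) ^ (t + i - t) * (t + i).choose t *
      m.choose (t + i) = m.choose t * ((-1) ^ i * (m - t).choose i) := fun i _ => by
    have := congrArg (Nat.cast : ℕ → ℤ) (Nat.choose_mul (n := m) (Nat.le_add_right t i))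
    rw [Nat.add_sub_cancel_left] at this ⊢
    push_cast at this
    linear_combination (-1 : ℤ) ^ i * this
  rw [← Ico_add_one_right_eq_Icc, sum_Ico_eq_sum_range, sum_congr rfl hterm, ← mul_sum]
  rcases lt_or_ge m t with hmt | htm
  · simp [Nat.choose_eq_zero_of_lt hmt, hmt.ne]
  · rw [Int.alternating_sum_range_choose_of_lt (by omega)]
    rcases htm.eq_or_lt with rfl | hlt
    · simp
    · simp [hlt.ne', Nat.sub_ne_zero_of_lt hlt]

theorem stmt_0_general (p r : ℕ) (hp : p.Prime) (q : ℕ) (hq : q = p ^ r)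
    (t : ℕ) (ht : t < q) (m : ℤ) :
    (m ≡ (t : ℤ) [ZMOD (q : ℤ)] →
      (∑ k ∈ Finset.Icc t (q - 1), (-1) ^ (k - t) * (k.choose t : ℤ) * Ring.choose m k)
        ≡ 1 [ZMOD (p : ℤ)]) ∧
    (¬ m ≡ (t : ℤ) [ZMOD (q : ℤ)] →
      (∑ k ∈ Finset.Icc t (q - 1), (-1) ^ (k - t) * (k.choose t : ℤ) * Ring.choose m k)
        ≡ 0 [ZMOD (p : ℤ)]) := by
  have hdvd : ∀ k < q, ∀ j ∈ Icc 1 k, p ∣ q.choose j := fun k hk j hj => by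
    rw [mem_Icc] at hj
    subst hq
    exact hp.dvd_choose_pow (by omega) (by omega)
  have hq0 : (0 : ℤ) < q := by exact_mod_cast t.zero_le.trans_lt ht
  obtain ⟨m₀, hm₀⟩ := Int.eq_ofNat_of_zero_le (Int.emod_nonneg m hq0.ne')
  have hm₀q : m₀ < q := by have := Int.emod_lt_of_pos m hq0; omega
  have hsum : (∑ k ∈ Icc t (q - 1), (-1) ^ (k - t) * (k.choose t : ℤ) * Ring.choose m k)
      ≡ if m₀ = t then 1 else 0 [ZMOD p] := by
    rw [← Int.sum_Icc_alternating_choose_mul_choose (Nat.le_sub_one_of_lt hm₀q)]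
    refine Int.ModEq.sum fun k hk => ?_
    rw [← Ring.choose_natCast (R := ℤ) m₀ k, ← hm₀]
    exact (Ring.choose_emod_modEq (hdvd k (by simp at hk; omega)) m).symm.mul_left _
  have hiff : m ≡ t [ZMOD q] ↔ m₀ = t := by
    rw [Int.ModEq, hm₀, Int.emod_eq_of_lt (by positivity) (by exact_mod_cast ht)]
    exact Int.natCast_inj
  rw [hiff]
  constructor <;> intro h <;> simpa [h] using hsum

/-- For `q = p^r` (`p` prime, `r ≥ 1`) and `0 ≤ t < q`, with
`h_t^{(q)}(x) = ∑_{k=t}^{q-1} (-1)^{k-t} C(k,t) C(x,k)` (generalized binomial `C(x,k)`),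
for every integer `m`: `h_t^{(q)}(m) ≡ 1 (mod p)` if `m ≡ t (mod q)`, else `≡ 0 (mod p)`. -/
theorem stmt_0 (p r : ℕ) (hp : p.Prime) (hr : 1 ≤ r) (q : ℕ) (hq : q = p ^ r)
    (t : ℕ) (ht : t < q) (m : ℤ) :
    (m ≡ (t : ℤ) [ZMOD (q : ℤ)] →
      (∑ k ∈ Finset.Icc t (q - 1), (-1) ^ (k - t) * (k.choose t : ℤ) * Ring.choose m k)
        ≡ 1 [ZMOD (p : ℤ)]) ∧
    (¬ m ≡ (t : ℤ) [ZMOD (q : ℤ)] →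
      (∑ k ∈ Finset.Icc t (q - 1), (-1) ^ (k - t) * (k.choose t : ℤ) * Ring.choose m k)
        ≡ 0 [ZMOD (p : ℤ)]) :=
  stmt_0_general p r hp q hq t ht m
end

section
/- Let p be prime, q = p^r, 0 ≤ t < q, and let m ≥ q be an integer with m ≢ t (mod q). Then C(m,t) · C(m-1-t, q-1-t) ≡ 0 (mod p). -/
/-!
Choosing `T ⊆ Q ⊆ [m]` with `|T| = t`, `|Q| = q` in either order gives
`C(m,q) C(q,t) = C(m,t) C(m-t,q-t)`; absorbing the factor `q - t` on both sides turns this into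
`(m - t) · C(m,t) · C(m-1-t, q-1-t) = q · C(m,q) · C(q-1,t)`. The right side is divisible by
`q = p^r`, while `m ≢ t (mod q)` says exactly that `q ∤ m - t`; so the remaining factor on the
left cannot be prime to `p`.
-/

theorem Nat.add_one_mul_choose_mul_choose (t a b : ℕ) :
    (a + 1) * ((t + a + 1).choose t * a.choose b) =
      (t + b + 1) * ((t + a + 1).choose (t + b + 1) * (t + b).choose t) := by
  have hpascal := Nat.add_one_mul_choose_eq a b
  have hsub := Nat.choose_mul (n := t + a + 1) (k := t + b + 1) (s := t) (by omega)
  have habsorb := Nat.choose_mul_succ_eq (t + b) t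
  simp only [show t + a + 1 - t = a + 1 by omega, show t + b + 1 - t = b + 1 by omega]
    at hsub habsorb
  calc (a + 1) * ((t + a + 1).choose t * a.choose b)
      = (t + a + 1).choose t * ((a + 1).choose (b + 1) * (b + 1)) := by rw [← hpascal]; ring
    _ = (t + a + 1).choose (t + b + 1) * ((t + b + 1).choose t * (b + 1)) := by
      rw [← mul_assoc, ← hsub, mul_assoc]
    _ = _ := by rw [← habsorb]; ring

theorem Nat.sub_mul_choose_mul_choose {q t m : ℕ} (htq : t < q) (htm : t < m) :
    (m - t) * (m.choose t * (m - 1 - t).choose (q - 1 - t)) =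
      q * (m.choose q * (q - 1).choose t) := by
  obtain ⟨a, rfl⟩ : ∃ a, m = t + a + 1 := ⟨m - 1 - t, by omega⟩
  obtain ⟨b, rfl⟩ : ∃ b, q = t + b + 1 := ⟨q - 1 - t, by omega⟩
  rw [show t + a + 1 - t = a + 1 by omega, show t + a + 1 - 1 - t = a by omega,
    show t + b + 1 - 1 - t = b by omega, Nat.add_sub_cancel]
  exact Nat.add_one_mul_choose_mul_choose t a b

theorem Nat.Prime.dvd_of_pow_dvd_mul_of_not_pow_dvd {p r a b : ℕ} (hp : p.Prime)
    (hab : p ^ r ∣ a * b) (ha : ¬ p ^ r ∣ a) : p ∣ b := by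
  by_contra hb
  exact ha (((hp.coprime_iff_not_dvd.mpr hb).pow_left r).dvd_of_dvd_mul_right hab)

/-- Let `p` be prime, `q = p^r`, `0 ≤ t < q`, and `m ≥ q` with
`m ≢ t (mod q)`. Then `C(m,t) · C(m-1-t, q-1-t) ≡ 0 (mod p)`. -/
theorem stmt_3 (p r : ℕ) (hp : p.Prime) (q : ℕ) (hq : q = p ^ r)
    (t m : ℕ) (ht : t < q) (hm : q ≤ m) (hmt : ¬ m ≡ t [MOD q]) :
    p ∣ m.choose t * (m - 1 - t).choose (q - 1 - t) := by
  have htm : t < m := ht.trans_le hm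
  have hq_not_dvd : ¬ q ∣ m - t := fun h => hmt ((Nat.modEq_iff_dvd' htm.le).mpr h).symm
  have hq_dvd : q ∣ (m - t) * (m.choose t * (m - 1 - t).choose (q - 1 - t)) :=
    ⟨_, Nat.sub_mul_choose_mul_choose ht htm⟩
  subst hq
  exact hp.dvd_of_pow_dvd_mul_of_not_pow_dvd hq_dvd hq_not_dvd
end

section
/- Let p be prime, q = p^r, 0 ≤ t < q, and let m ≥ q be an integer with m ≡ t (mod q). Then (-1)^{q-1-t} C(m,t) · C(m-1-t, q-1-t) ≡ 1 (mod p). -/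
/-!
By Lucas's theorem, `C(n, k) ≡ C(n mod p^r, k) (mod p)` whenever `k < p^r`. Since `m mod q = t`
and `(m - 1 - t) mod q = q - 1`, this gives `C(m, t) ≡ 1` and
`C(m - 1 - t, q - 1 - t) ≡ C(q - 1, q - 1 - t)`. Finally `C(q - 1, k) ≡ (-1)^k` for `k < q`:
Pascal's rule `C(q, k + 1) = C(q - 1, k) + C(q - 1, k + 1)` with `p ∣ C(q, k + 1)` flips the sign
at each step.
-/

namespace Nat

theorem cast_choose_pred_eq_neg_one_pow {R : Type*} [CommRing R] {n : ℕ}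
    (h : ∀ j, 0 < j → j < n → (n.choose j : R) = 0) {k : ℕ} (hk : k < n) :
    ((n - 1).choose k : R) = (-1) ^ k := by
  induction k with
  | zero => simp
  | succ k ih =>
    have pascal := congrArg (Nat.cast : ℕ → R) (choose_succ_right n k (by omega))
    push_cast at pascal
    rw [h (k + 1) k.succ_pos hk, ih (by omega)] at pascal
    linear_combination -pascal

theorem cast_choose_prime_pow_sub_one {p : ℕ} (hp : p.Prime) (r : ℕ) {k : ℕ} (hk : k < p ^ r) :
    ((p ^ r - 1).choose k : ZMod p) = (-1) ^ k :=
  cast_choose_pred_eq_neg_one_pow (fun _ hj hjq ↦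
    (ZMod.natCast_eq_zero_iff _ _).mpr (hp.dvd_choose_pow hj.ne' hjq.ne)) hk

theorem sub_one_sub_modEq_sub_one {q m t : ℕ} (ht : t < q) (hm : q ≤ m) (hmt : m ≡ t [MOD q]) :
    m - 1 - t ≡ q - 1 [MOD q] :=
  ModEq.add_right_cancel' (t + 1) <| by
    rw [show m - 1 - t + (t + 1) = m by omega, show q - 1 + (t + 1) = t + q by omega]
    exact hmt.trans (add_mod_right t q).symm

variable {p : ℕ} [Fact p.Prime]

theorem cast_choose_eq_cast_choose_mod_mul_cast_choose_div (n k : ℕ) :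
    (n.choose k : ZMod p) = (n % p).choose (k % p) * (n / p).choose (k / p) := by
  exact_mod_cast
    (ZMod.intCast_eq_intCast_iff _ _ p).mpr Choose.choose_modEq_choose_mod_mul_choose_div

theorem cast_choose_eq_cast_choose_mod_pow (n : ℕ) {r k : ℕ} (hk : k < p ^ r) :
    (n.choose k : ZMod p) = ((n % p ^ r).choose k : ZMod p) := by
  induction r generalizing n k with
  | zero =>
    obtain rfl : k = 0 := by simpa using hk
    simp
  | succ r ih =>
    have hk' : k / p < p ^ r := Nat.div_lt_of_lt_mul (by rwa [← pow_succ'])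
    rw [cast_choose_eq_cast_choose_mod_mul_cast_choose_div n k,
      cast_choose_eq_cast_choose_mod_mul_cast_choose_div (n % _) k, ih _ hk', pow_succ',
      mod_mul_right_mod, mod_mul_right_div_self]

end Nat

theorem stmt_4_general (p r : ℕ) (hp : p.Prime) (q : ℕ) (hq : q = p ^ r)
    (t m : ℕ) (ht : t < q) (hm : q ≤ m) (hmt : m ≡ t [MOD q]) :
    ((-1) ^ (q - 1 - t) * (m.choose t : ℤ) * ((m - 1 - t).choose (q - 1 - t) : ℤ))
      ≡ 1 [ZMOD (p : ℤ)] := by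
  have := Fact.mk hp
  subst hq
  have hchoose_m : (m.choose t : ZMod p) = 1 := by
    rw [Nat.cast_choose_eq_cast_choose_mod_pow m ht, hmt, Nat.mod_eq_of_lt ht, Nat.choose_self,
      Nat.cast_one]
  have hchoose_sub : ((m - 1 - t).choose (p ^ r - 1 - t) : ZMod p) = (-1) ^ (p ^ r - 1 - t) := by
    rw [Nat.cast_choose_eq_cast_choose_mod_pow _ (r := r) (by omega),
      Nat.sub_one_sub_modEq_sub_one ht hm hmt, Nat.mod_eq_of_lt (by omega),
      Nat.cast_choose_prime_pow_sub_one hp r (by omega)]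
  rw [← ZMod.intCast_eq_intCast_iff]
  push_cast
  rw [hchoose_m, hchoose_sub, mul_one, ← pow_add, Even.neg_one_pow ⟨_, rfl⟩]

/-- Let `p` be prime, `q = p^r`, `0 ≤ t < q`, and `m ≥ q` with
`m ≡ t (mod q)`. Then `(-1)^{q-1-t} C(m,t) · C(m-1-t, q-1-t) ≡ 1 (mod p)`. -/
theorem stmt_4 (p r : ℕ) (hp : p.Prime) (hr : 1 ≤ r) (q : ℕ) (hq : q = p ^ r)
    (t m : ℕ) (ht : t < q) (hm : q ≤ m) (hmt : m ≡ t [MOD q]) :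
    ((-1) ^ (q - 1 - t) * (m.choose t : ℤ) * ((m - 1 - t).choose (q - 1 - t) : ℤ))
      ≡ 1 [ZMOD (p : ℤ)] :=
  stmt_4_general p r hp q hq t m ht hm hmt
end

section
/- For nonnegative integers 0 ≤ t < q and a positive integer m, one has ∑_{k=t}^{q-1} (-1)^{k-t} C(k,t) C(-m,k) = (-1)^t C(m+t-1, t) C(q+m-1, q-1-t), where C(-m,k) = (-1)^k C(m+k-1, k). -/
/-!
With `m = n + 1`, the signs combine to `(-1) ^ t` in every term. Trinomial revision
`C(k,t) C(n+k,k) = C(n+t,t) C(n+k,n+t)` pulls the factor `C(n+t,t)` out of the sum, and what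
remains is the hockey-stick identity `∑_{k=t}^{q-1} C(n+k,n+t) = C(n+q,n+t+1)`.
-/

open Finset

theorem Nat.choose_mul_add_choose (n : ℕ) {t k : ℕ} (htk : t ≤ k) :
    k.choose t * (n + k).choose k = (n + t).choose t * (n + k).choose (n + t) := by
  have h := Nat.choose_mul (n := n + k) (Nat.sub_le k t)
  rw [Nat.choose_symm htk, Nat.choose_symm_of_eq_add (by omega : n + k = (k - t) + (n + t)),
    show n + k - (k - t) = n + t by omega, show k - (k - t) = t by omega] at h
  rw [mul_comm, h, mul_comm]

theorem Nat.sum_Icc_add_choose (n t p : ℕ) :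
    ∑ k ∈ Icc t p, (n + k).choose (n + t) = (n + p + 1).choose (n + t + 1) := by
  rw [← Nat.sum_Icc_choose, ← map_add_left_Icc, sum_map]
  rfl

theorem Nat.sum_Icc_choose_mul_add_choose (n t p : ℕ) :
    ∑ k ∈ Icc t p, k.choose t * (n + k).choose k
      = (n + t).choose t * (n + p + 1).choose (n + t + 1) := by
  rw [← Nat.sum_Icc_add_choose, mul_sum]
  exact sum_congr rfl fun k hk => Nat.choose_mul_add_choose n (mem_Icc.1 hk).1

theorem neg_one_pow_sub_mul_neg_one_pow {R : Type*} [Monoid R] [HasDistribNeg R] {t k : ℕ}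
    (htk : t ≤ k) : (-1 : R) ^ (k - t) * (-1) ^ k = (-1) ^ t := by
  obtain ⟨j, rfl⟩ := Nat.exists_eq_add_of_le htk
  rw [Nat.add_sub_cancel_left, ← pow_add, show j + (t + j) = t + 2 * j by omega, pow_add,
    pow_mul, neg_one_sq, one_pow, mul_one]

/-- For `0 ≤ t < q` and a positive integer `m`,
`∑_{k=t}^{q-1} (-1)^{k-t} C(k,t) C(-m,k) = (-1)^t C(m+t-1,t) C(q+m-1, q-1-t)`,
where `C(-m,k) = (-1)^k C(m+k-1,k)`. Exact integer identity. -/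
theorem stmt_5 (t q m : ℕ) (htq : t < q) (hm : 1 ≤ m) :
    (∑ k ∈ Finset.Icc t (q - 1),
        (-1) ^ (k - t) * (k.choose t : ℤ) * ((-1) ^ k * ((m + k - 1).choose k : ℤ)))
      = (-1) ^ t * ((m + t - 1).choose t : ℤ) * ((q + m - 1).choose (q - 1 - t) : ℤ) := by
  obtain ⟨n, rfl⟩ : ∃ n, m = n + 1 := ⟨m - 1, by omega⟩
  have hterm : ∀ k ∈ Icc t (q - 1),
      (-1) ^ (k - t) * (k.choose t : ℤ) * ((-1) ^ k * ((n + 1 + k - 1).choose k : ℤ))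
        = (-1) ^ t * ((k.choose t * (n + k).choose k : ℕ) : ℤ) := fun k hk => by
    rw [← neg_one_pow_sub_mul_neg_one_pow (mem_Icc.1 hk).1, show n + 1 + k - 1 = n + k by omega]
    push_cast
    ring
  have hsymm : (q + (n + 1) - 1).choose (q - 1 - t) = (n + (q - 1) + 1).choose (n + t + 1) := by
    rw [show n + (q - 1) + 1 = q + (n + 1) - 1 by omega]
    exact Nat.choose_symm_of_eq_add (by omega)
  rw [sum_congr rfl hterm, ← mul_sum, ← Nat.cast_sum, Nat.sum_Icc_choose_mul_add_choose, hsymm,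
    show n + 1 + t - 1 = n + t by omega]
  push_cast
  ring
end

section
/- Let p be prime, q = p^r, 0 ≤ t < q, and m a positive integer. If m ≡ -t (mod q) then (-1)^t C(m+t-1,t) C(q+m-1, q-1-t) ≡ 1 (mod p), and if m ≢ -t (mod q) then this quantity is ≡ 0 (mod p). -/
/-!
Write `q = p ^ r`. By Lucas's theorem, `C(n, k) ≡ C(n % q, k) (mod p)` whenever `k < q`, and
`C(q - 1, t) ≡ (-1) ^ t (mod p)` by induction on `t`, since
`C(q - 1, t) + C(q - 1, t + 1) = C(q, t + 1) ≡ 0 (mod p)` for `t + 1 < q`.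
Write `m + t = q s + u` with `u < q`. If `u = 0`, the two binomials reduce to `C(q - 1, t)` and
`C(q - 1 - t, q - 1 - t) = 1`. Otherwise the first reduces to `C(u - 1, t)`, which is `0` when
`u ≤ t`, and the second to `C(u - t - 1, q - 1 - t)`, which is `0` when `u > t`.
-/

open Nat Finset

namespace Choose

variable {p : ℕ} [hp : Fact p.Prime]

theorem choose_modEq_choose_mod_pow {r n k : ℕ} (hk : k < p ^ r) :
    (n.choose k : ℤ) ≡ ((n % p ^ r).choose k : ℤ) [ZMOD p] := by
  have digits : ∀ i ∈ range r, n % p ^ r / p ^ i % p = n / p ^ i % p := by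
    intro i hi
    obtain ⟨j, rfl⟩ := Nat.exists_eq_add_of_lt (mem_range.mp hi)
    rw [add_assoc, pow_add, Nat.mod_mul_right_div_self,
      Nat.mod_mod_of_dvd _ (dvd_pow_self p j.succ_ne_zero)]
  calc (n.choose k : ℤ)
      ≡ ((n / p ^ r).choose (k / p ^ r) : ℕ) *
          (∏ i ∈ range r, (n / p ^ i % p).choose (k / p ^ i % p) : ℕ) [ZMOD p] :=
        choose_modEq_choose_mul_prod_range_choose r
    _ = ∏ i ∈ range r, ((n % p ^ r / p ^ i % p).choose (k / p ^ i % p) : ℤ) := by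
        rw [Nat.div_eq_of_lt hk, choose_zero_right, cast_one, one_mul, cast_prod]
        exact prod_congr rfl fun i hi => by rw [digits i hi]
    _ ≡ ((n % p ^ r).choose k : ℤ) [ZMOD p] :=
        (choose_modEq_prod_range_choose (Nat.mod_lt _ (pow_pos hp.out.pos r)) hk).symm

theorem choose_mul_add_modEq_choose {r a b k : ℕ} (hb : b < p ^ r) (hk : k < p ^ r) :
    ((p ^ r * a + b).choose k : ℤ) ≡ (b.choose k : ℤ) [ZMOD p] := by
  have h := choose_modEq_choose_mod_pow (n := p ^ r * a + b) hk
  rwa [Nat.mul_add_mod, Nat.mod_eq_of_lt hb] at h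

theorem choose_pow_sub_one_modEq_neg_one_pow {r t : ℕ} (ht : t < p ^ r) :
    ((p ^ r - 1).choose t : ℤ) ≡ (-1) ^ t [ZMOD p] := by
  induction t with
  | zero => simp [Int.ModEq.refl]
  | succ t ih =>
    have pascal : (p ^ r - 1).choose t + (p ^ r - 1).choose (t + 1) = (p ^ r).choose (t + 1) := by
      rw [← choose_succ_succ', Nat.sub_add_cancel (pow_pos hp.out.pos r)]
    have hdvd : ((p ^ r).choose (t + 1) : ℤ) ≡ 0 [ZMOD p] :=
      Int.modEq_zero_iff_dvd.mpr <| Int.natCast_dvd_natCast.mpr <|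
        hp.out.dvd_choose_pow t.succ_ne_zero ht.ne
    calc ((p ^ r - 1).choose (t + 1) : ℤ)
        = ((p ^ r).choose (t + 1) : ℤ) - ((p ^ r - 1).choose t : ℤ) := by
          rw [← pascal]; push_cast; ring
      _ ≡ 0 - (-1) ^ t [ZMOD p] := hdvd.sub (ih (by omega))
      _ = (-1) ^ (t + 1) := by ring

theorem neg_one_pow_mul_choose_mul_choose_modEq_one {r t m : ℕ} (ht : t < p ^ r) (hm : 1 ≤ m)
    (hdvd : p ^ r ∣ m + t) :
    (-1) ^ t * ((m + t - 1).choose t : ℤ) * ((p ^ r + m - 1).choose (p ^ r - 1 - t) : ℤ)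
      ≡ 1 [ZMOD p] := by
  obtain ⟨s, hs⟩ := hdvd
  obtain ⟨s, rfl⟩ : ∃ s', s = s' + 1 := Nat.exists_eq_succ_of_ne_zero (by rintro rfl; omega)
  rw [mul_add_one] at hs
  have hA : ((m + t - 1).choose t : ℤ) ≡ (-1) ^ t [ZMOD p] := by
    rw [show m + t - 1 = p ^ r * s + (p ^ r - 1) by omega]
    exact (choose_mul_add_modEq_choose (by omega) ht).trans (choose_pow_sub_one_modEq_neg_one_pow ht)
  have hB : ((p ^ r + m - 1).choose (p ^ r - 1 - t) : ℤ) ≡ 1 [ZMOD p] := by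
    rw [show p ^ r + m - 1 = p ^ r * (s + 1) + (p ^ r - 1 - t) by rw [mul_add_one]; omega]
    simpa using choose_mul_add_modEq_choose (a := s + 1) (by omega : p ^ r - 1 - t < p ^ r)
      (by omega : p ^ r - 1 - t < p ^ r)
  calc _ ≡ (-1) ^ t * (-1) ^ t * 1 [ZMOD p] := by gcongr
    _ = 1 := by rw [← mul_pow]; simp

theorem neg_one_pow_mul_choose_mul_choose_modEq_zero {r t m : ℕ} (ht : t < p ^ r)
    (hndvd : ¬ p ^ r ∣ m + t) :
    (-1) ^ t * ((m + t - 1).choose t : ℤ) * ((p ^ r + m - 1).choose (p ^ r - 1 - t) : ℤ)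
      ≡ 0 [ZMOD p] := by
  have hu : (m + t) % p ^ r < p ^ r := Nat.mod_lt _ (pow_pos hp.out.pos r)
  have hu0 : (m + t) % p ^ r ≠ 0 := fun h => hndvd (Nat.dvd_of_mod_eq_zero h)
  have hdiv := Nat.div_add_mod (m + t) (p ^ r)
  set u := (m + t) % p ^ r
  set s := (m + t) / p ^ r
  rcases le_or_gt u t with hut | htu
  · have hA : ((m + t - 1).choose t : ℤ) ≡ 0 [ZMOD p] := by
      rw [show m + t - 1 = p ^ r * s + (u - 1) by omega]
      simpa [Nat.choose_eq_zero_of_lt (by omega : u - 1 < t)] using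
        choose_mul_add_modEq_choose (a := s) (by omega : u - 1 < p ^ r) ht
    calc _ ≡ (-1) ^ t * 0 * ((p ^ r + m - 1).choose (p ^ r - 1 - t) : ℤ) [ZMOD p] := by gcongr
      _ = 0 := by ring
  · have hB : ((p ^ r + m - 1).choose (p ^ r - 1 - t) : ℤ) ≡ 0 [ZMOD p] := by
      rw [show p ^ r + m - 1 = p ^ r * (s + 1) + (u - t - 1) by rw [mul_add_one]; omega]
      simpa [Nat.choose_eq_zero_of_lt (by omega : u - t - 1 < p ^ r - 1 - t)] using
        choose_mul_add_modEq_choose (a := s + 1) (by omega : u - t - 1 < p ^ r)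
          (by omega : p ^ r - 1 - t < p ^ r)
    calc _ ≡ (-1) ^ t * ((m + t - 1).choose t : ℤ) * 0 [ZMOD p] := by gcongr
      _ = 0 := by ring

end Choose

open Choose in
/-- Let `p` be prime, `q = p^r`, `0 ≤ t < q`, `m ≥ 1`.
If `m ≡ -t (mod q)` then `(-1)^t C(m+t-1,t) C(q+m-1, q-1-t) ≡ 1 (mod p)`,
and if `m ≢ -t (mod q)` then it is `≡ 0 (mod p)`. -/
theorem stmt_6 (p r : ℕ) (hp : p.Prime) (q : ℕ) (hq : q = p ^ r)
    (t m : ℕ) (ht : t < q) (hm : 1 ≤ m) :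
    ((m : ℤ) ≡ -(t : ℤ) [ZMOD (q : ℤ)] →
      ((-1) ^ t * ((m + t - 1).choose t : ℤ) * ((q + m - 1).choose (q - 1 - t) : ℤ))
        ≡ 1 [ZMOD (p : ℤ)]) ∧
    (¬ (m : ℤ) ≡ -(t : ℤ) [ZMOD (q : ℤ)] →
      ((-1) ^ t * ((m + t - 1).choose t : ℤ) * ((q + m - 1).choose (q - 1 - t) : ℤ))
        ≡ 0 [ZMOD (p : ℤ)]) := by
  have : Fact p.Prime := ⟨hp⟩
  have hcong : (m : ℤ) ≡ -(t : ℤ) [ZMOD (q : ℤ)] ↔ q ∣ m + t := by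
    rw [Int.modEq_iff_dvd, neg_sub_left, dvd_neg]
    exact_mod_cast Iff.rfl
  subst hq
  rw [hcong]
  exact ⟨neg_one_pow_mul_choose_mul_choose_modEq_one ht hm,
    neg_one_pow_mul_choose_mul_choose_modEq_zero ht⟩
end

section
/- Let p be prime and t = p^j a power of p. Then for every integer e and nonnegative integer k, C(e - t, k) ≡ ∑_{0 ≤ b ≤ k, b ≡ k (mod t)} (-1)^{k-b} C(e, b) (mod p). -/
/-!
Vandermonde's identity gives `C(e - t, k) = ∑_b C(e, b) C(-t, k - b)`, and
`C(-t, s) = (-1)^s multichoose(t, s)`. Lucas' theorem, applied one base-`p` digit at a time,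
shows that `multichoose(p^j, s)` is `1` mod `p` when `p^j ∣ s` and `0` mod `p` otherwise, so
only the terms with `b ≡ k (mod t)` survive.
-/

theorem Choose.choose_mul_add_modEq {p : ℕ} [Fact p.Prime] {a b c d : ℕ} (hc : c < p)
    (hd : d < p) : (p * a + c).choose (p * b + d) ≡ c.choose d * a.choose b [MOD p] := by
  have hp : 0 < p := (Fact.out : p.Prime).pos
  have hmod {x y : ℕ} (hy : y < p) : (p * x + y) % p = y := by
    rw [Nat.mul_add_mod, Nat.mod_eq_of_lt hy]
  have hdiv {x y : ℕ} (hy : y < p) : (p * x + y) / p = x := by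
    rw [Nat.mul_add_div hp, Nat.div_eq_of_lt hy, add_zero]
  simpa only [hmod hc, hmod hd, hdiv hc, hdiv hd] using
    Choose.choose_modEq_choose_mod_mul_choose_div_nat (p := p) (n := p * a + c) (k := p * b + d)

theorem Nat.multichoose_zero_left_of_pos {k : ℕ} (hk : 0 < k) : multichoose 0 k = 0 := by
  obtain ⟨k, rfl⟩ := Nat.exists_eq_add_one_of_ne_zero hk.ne'
  exact Nat.multichoose_zero_succ k

theorem Nat.multichoose_prime_mul_modEq {p : ℕ} [Fact p.Prime] (m s : ℕ) :
    (p * m).multichoose s ≡ if p ∣ s then m.multichoose (s / p) else 0 [MOD p] := by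
  have hp : 0 < p := (Fact.out : p.Prime).pos
  -- `(p * m).multichoose s = C(p * m + s - 1, s)`; apply Lucas to the last digit `r` of `s`.
  obtain ⟨q, r, hr, rfl⟩ : ∃ q r, r < p ∧ s = p * q + r :=
    ⟨s / p, s % p, Nat.mod_lt _ hp, (Nat.div_add_mod s p).symm⟩
  rcases Nat.eq_zero_or_pos r with rfl | hr0
  · rw [add_zero, if_pos (dvd_mul_right p q), Nat.mul_div_cancel_left q hp]
    rcases m with _ | m
    · rcases Nat.eq_zero_or_pos q with rfl | hq
      · rfl
      · rw [mul_zero, Nat.multichoose_zero_left_of_pos hq,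
          Nat.multichoose_zero_left_of_pos (Nat.mul_pos hp hq)]
    have hn : p * (m + 1) + p * q - 1 = p * (m + q) + (p - 1) := by
      rw [Nat.mul_add, Nat.mul_add, Nat.mul_one]; omega
    simpa [Nat.multichoose_eq, hn] using
      Choose.choose_mul_add_modEq (a := m + q) (b := q) (Nat.sub_lt hp one_pos) hp
  · have hndvd : ¬ p ∣ p * q + r := fun h =>
      (Nat.not_dvd_of_pos_of_lt hr0 hr) ((Nat.dvd_add_right (dvd_mul_right p q)).mp h)
    rw [if_neg hndvd]
    rcases m with _ | m
    · rw [mul_zero, Nat.multichoose_zero_left_of_pos (by omega)]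
    have hn : p * (m + 1) + (p * q + r) - 1 = p * (m + q + 1) + (r - 1) := by
      rw [Nat.mul_add, Nat.mul_add, Nat.mul_add, Nat.mul_one]; omega
    simpa [Nat.multichoose_eq, hn, Nat.choose_eq_zero_of_lt (Nat.sub_lt hr0 one_pos)] using
      Choose.choose_mul_add_modEq (a := m + q + 1) (b := q) (c := r - 1) (by omega) hr

theorem Nat.multichoose_prime_pow_modEq {p : ℕ} [Fact p.Prime] (j s : ℕ) :
    (p ^ j).multichoose s ≡ if p ^ j ∣ s then 1 else 0 [MOD p] := by
  induction j generalizing s with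
  | zero => simp [Nat.multichoose_one, Nat.ModEq.refl]
  | succ j ih =>
    have hp : 0 < p := (Fact.out : p.Prime).pos
    rw [pow_succ']
    refine (Nat.multichoose_prime_mul_modEq _ _).trans ?_
    by_cases hps : p ∣ s
    · obtain ⟨q, rfl⟩ := hps
      simpa only [if_pos (dvd_mul_right p q), Nat.mul_div_cancel_left q hp,
        Nat.mul_dvd_mul_iff_left hp] using ih q
    · rw [if_neg hps, if_neg fun h => hps (dvd_of_mul_right_dvd h)]

theorem Ring.choose_neg_natCast (n k : ℕ) :
    Ring.choose (-(n : ℤ)) k = (-1) ^ k * n.multichoose k := by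
  rw [Ring.choose_neg', Units.smul_def, Int.coe_negOnePow_natCast, smul_eq_mul,
    Nat.multichoose_eq]
  rfl

theorem Ring.choose_neg_prime_pow_modEq {p : ℕ} [Fact p.Prime] (j s : ℕ) :
    Ring.choose (-(p ^ j : ℕ) : ℤ) s ≡ if p ^ j ∣ s then (-1) ^ s else 0 [ZMOD p] := by
  rw [Ring.choose_neg_natCast]
  have h := Int.natCast_modEq_iff.mpr (Nat.multichoose_prime_pow_modEq (p := p) j s)
  refine (h.mul_left ((-1) ^ s)).trans ?_
  split_ifs <;> simp

/-- Let `p` be prime and `t = p^j`. Then for every integer `e` and `k : ℕ`,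
`C(e - t, k) ≡ ∑_{0 ≤ b ≤ k, b ≡ k (mod t)} (-1)^{k-b} C(e, b) (mod p)`. -/
theorem stmt_10 (p j : ℕ) (hp : p.Prime) (t : ℕ) (ht : t = p ^ j) (e : ℤ) (k : ℕ) :
    Ring.choose (e - (t : ℤ)) k
      ≡ (∑ b ∈ (Finset.range (k + 1)).filter (fun b => b % t = k % t),
          (-1) ^ (k - b) * Ring.choose e b)
      [ZMOD (p : ℤ)] := by
  have : Fact p.Prime := ⟨hp⟩
  subst ht
  rw [sub_eq_add_neg, Ring.add_choose_eq k (Commute.all _ _),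
    Finset.Nat.sum_antidiagonal_eq_sum_range_succ_mk, Finset.sum_filter]
  refine Int.ModEq.sum fun b hb => ?_
  have hbk : b ≤ k := Nat.lt_succ_iff.mp (Finset.mem_range.mp hb)
  have hdvd : p ^ j ∣ k - b ↔ b % p ^ j = k % p ^ j := (Nat.modEq_iff_dvd' hbk).symm
  calc Ring.choose e b * Ring.choose (-(p ^ j : ℕ) : ℤ) (k - b)
      ≡ Ring.choose e b * (if p ^ j ∣ k - b then (-1) ^ (k - b) else 0) [ZMOD p] :=
        (Ring.choose_neg_prime_pow_modEq j (k - b)).mul_left _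
    _ = _ := by simp only [hdvd]; split_ifs <;> ring
end

section
/- Let p be prime and t = p^j. For a nonnegative integer s, the binomial coefficient C(t - 1 + s, s) is congruent to 1 mod p if t divides s, and congruent to 0 mod p otherwise. -/
/-- Let `p` be prime and `t = p^j`. For `s : ℕ`, the binomial coefficient
`C(t - 1 + s, s)` is `≡ 1 (mod p)` if `t ∣ s`, and `≡ 0 (mod p)` otherwise. -/
theorem stmt_11 (p j : ℕ) (hp : p.Prime) (t : ℕ) (ht : t = p ^ j) (s : ℕ) :
    (t ∣ s → (t - 1 + s).choose s ≡ 1 [MOD p]) ∧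
    (¬ t ∣ s → (t - 1 + s).choose s ≡ 0 [MOD p]) := by
  subst ht
  haveI : Fact p.Prime := ⟨hp⟩
  have hp2 : 2 ≤ p := hp.two_le
  induction j generalizing s with
  | zero =>
    refine ⟨fun _ => ?_, fun h => absurd (by simp) h⟩
    rw [pow_zero, show 1 - 1 + s = s by omega, Nat.choose_self]
  | succ j ih =>
    set q := s / p with hq
    set r := s % p with hr
    have hrp : r < p := Nat.mod_lt _ (by omega)
    have hsqr : p * q + r = s := Nat.div_add_mod s p
    have hpj : 1 ≤ p ^ j := Nat.one_le_pow _ _ (by omega)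
    have hXp : p ≤ p ^ j * p := Nat.le_mul_of_pos_left _ hpj
    have e : p ^ (j + 1) - 1 + s = (p ^ j - 1 + q) * p + (p - 1 + r) := by
      rw [pow_succ, add_mul, Nat.sub_mul, one_mul]
      have hqp : q * p = p * q := mul_comm q p
      generalize hX : p ^ j * p = X at *
      omega
    have key := Choose.choose_modEq_choose_mod_mul_choose_div_nat
      (p := p) (n := p ^ (j + 1) - 1 + s) (k := s)
    rw [e, mul_comm (p ^ j - 1 + q) p, Nat.mul_add_mod,
      Nat.mul_add_div (by omega : 0 < p)] at key
    have e2 : p * (p ^ j - 1 + q) + (p - 1 + r) = p ^ (j + 1) - 1 + s := by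
      rw [e]; ring
    rw [e2, ← hr, ← hq] at key
    by_cases hr0 : r = 0
    · have hs' : s = p * q := by rw [← hsqr, hr0, add_zero]
      have hm : (p - 1 + r) % p = p - 1 := by
        rw [hr0, add_zero]; exact Nat.mod_eq_of_lt (by omega)
      have hd : (p - 1 + r) / p = 0 := by
        rw [hr0, add_zero]; exact Nat.div_eq_of_lt (by omega)
      rw [hm, hd, add_zero, hr0, Nat.choose_zero_right, one_mul] at key
      constructor
      · intro hdvd
        have hq' : p ^ j ∣ q := by
          obtain ⟨c, hc⟩ := hdvd
          refine ⟨c, Nat.eq_of_mul_eq_mul_left (show 0 < p by omega) ?_⟩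
          rw [show p * (p ^ j * c) = p ^ (j + 1) * c by rw [pow_succ']; ring, ← hc]
          exact hs'.symm
        exact key.trans ((ih q).1 hq')
      · intro hnd
        have hq' : ¬ p ^ j ∣ q := by
          intro hc
          refine hnd ?_
          obtain ⟨c, hc⟩ := hc
          exact ⟨c, by rw [hs', hc, pow_succ']; ring⟩
        exact key.trans ((ih q).2 hq')
    · have hm : (p - 1 + r) % p = r - 1 := by
        have h1 : p - 1 + r = (r - 1) + 1 * p := by omega
        rw [h1, Nat.add_mul_mod_self_right]
        exact Nat.mod_eq_of_lt (by omega)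
      have hd : (p - 1 + r) / p = 1 := by
        have h1 : p - 1 + r = (r - 1) + 1 * p := by omega
        rw [h1, Nat.add_mul_div_right _ _ (show 0 < p by omega),
          Nat.div_eq_of_lt (by omega)]
      rw [hm, hd] at key
      have hz : Nat.choose (r - 1) r = 0 := Nat.choose_eq_zero_of_lt (by omega)
      rw [hz, zero_mul] at key
      refine ⟨fun hdvd => absurd ?_ hr0, fun _ => key⟩
      have hps : p ∣ s := dvd_trans (dvd_pow_self p (Nat.succ_ne_zero j)) hdvd
      rw [hr]
      exact Nat.dvd_iff_mod_eq_zero.mp hps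
end

section
/- Let p be prime, q = p^r, and 0 ≤ a < q - 1. For every integer b with 0 ≤ b ≤ q - 1, ∑_{u = max(a-b, 0)}^{q-1-b} C(u + b, a) ≡ -C(b, a+1) (mod p). -/
/-!
Shifting the index, the sum is `∑_{m=b}^{q-1} C(m, a)` (the terms with `m < a` vanish), which by the
hockey-stick identity equals `C(q, a+1) - C(b, a+1)`. Since `0 < a + 1 < q` and `q` is a power of
`p`, the prime `p` divides `C(q, a+1)`.
-/

open Finset

namespace Nat

theorem sum_range_choose_left (n a : ℕ) : ∑ m ∈ range n, m.choose a = n.choose (a + 1) := by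
  induction n with
  | zero => simp
  | succ n ih => rw [sum_range_succ, ih, choose_succ_succ, add_comm]

theorem sum_Ico_choose_add_choose (a : ℕ) {b n : ℕ} (hbn : b ≤ n) :
    ∑ m ∈ Ico b n, m.choose a + b.choose (a + 1) = n.choose (a + 1) := by
  rw [← sum_range_choose_left, ← sum_range_choose_left, add_comm, sum_range_add_sum_Ico _ hbn]

theorem sum_Icc_sub_choose_add (a : ℕ) {b n : ℕ} (hbn : b < n) :
    ∑ u ∈ Icc (a - b) (n - 1 - b), (u + b).choose a = ∑ m ∈ Ico b n, m.choose a := by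
  have hsub : Icc (a - b) (n - 1 - b) ⊆ range (n - b) := fun u hu => by
    simp only [mem_Icc, mem_range] at hu ⊢
    omega
  have hzero : ∀ u ∈ range (n - b), u ∉ Icc (a - b) (n - 1 - b) → (u + b).choose a = 0 :=
    fun u hu hu' => by
      simp only [mem_Icc, mem_range] at hu hu'
      exact choose_eq_zero_of_lt (by omega)
  rw [sum_subset hsub hzero, sum_Ico_eq_sum_range]
  simp only [add_comm b]

end Nat

/-- Let `p` be prime, `q = p^r`, `0 ≤ a < q - 1`. For every `b ≤ q - 1`,
`∑_{u = max(a-b,0)}^{q-1-b} C(u + b, a) ≡ -C(b, a+1) (mod p)`. -/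
theorem stmt_13 (p r : ℕ) (hp : p.Prime) (q : ℕ) (hq : q = p ^ r)
    (a : ℕ) (ha : a < q - 1) (b : ℕ) (hb : b ≤ q - 1) :
    (∑ u ∈ Finset.Icc (a - b) (q - 1 - b), ((u + b).choose a : ℤ))
      ≡ -(b.choose (a + 1) : ℤ) [ZMOD (p : ℤ)] := by
  have hockey : ∑ u ∈ Icc (a - b) (q - 1 - b), (u + b).choose a + b.choose (a + 1)
      = q.choose (a + 1) := by
    rw [Nat.sum_Icc_sub_choose_add a (by omega), Nat.sum_Ico_choose_add_choose a (by omega)]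
  have hdvd : p ∣ q.choose (a + 1) := hq ▸ hp.dvd_choose_pow a.succ_ne_zero (by omega)
  rw [Int.modEq_iff_dvd]
  have hcast := congrArg (Nat.cast : ℕ → ℤ) hockey
  push_cast at hcast
  rw [show -(b.choose (a + 1) : ℤ) - ∑ u ∈ Icc (a - b) (q - 1 - b), ((u + b).choose a : ℤ)
      = -(q.choose (a + 1) : ℤ) by omega]
  exact (Int.natCast_dvd_natCast.mpr hdvd).neg_right
end

section
/- Let λ = (λ_1, ..., λ_{m+n}) be a dominant weight of GL(m|n), i.e. λ_1 ≥ ... ≥ λ_m and λ_{m+1} ≥ ... ≥ λ_{m+n} are integers. Let q ≥ 1 and α = (α_1, ..., α_{m+n}) with 0 ≤ α_i < q for each i, such that ∑α_i ≡ ∑λ_i (mod q). Then there exists a dominant weight μ with μ ⊴ λ (i.e. ∑_{i≤k} μ_i ≤ ∑_{i≤k} λ_i for all 1 ≤ k < m+n and ∑μ_i = ∑λ_i, with μ dominant) such that μ_i ≡ α_i (mod q) for every 1 ≤ i ≤ m+n. -/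
/-!
Write `μ = α + q c` with `c` an integer vector. Choose `c` strictly decreasing on each block,
with `c ≤ -B` on the first block and `c ≥ B` on the second, where `B` exceeds every `|λ i|`,
and with `∑ c = (∑ λ - ∑ α) / q`; the surplus is absorbed by the top entry `c m` of the second
block, which the very negative first block forces to be large. Residues in `[0, q)` cannot undo a
strict decrease of `c`, so `μ` is dominant. Moreover `μ ≤ λ` entrywise on the first block and
`μ ≥ λ` entrywise after index `m`, which together with equal totals gives `μ ⊴ λ`.
-/

open Finset

theorem Finset.sum_le_sum_of_sum_eq_of_compl_le {ι M : Type*} [Fintype ι] [DecidableEq ι]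
    [AddCommGroup M] [PartialOrder M] [IsOrderedAddMonoid M] {s : Finset ι} {f g : ι → M}
    (hsum : ∑ i, f i = ∑ i, g i) (h : ∀ i ∉ s, g i ≤ f i) :
    ∑ i ∈ s, f i ≤ ∑ i ∈ s, g i := by
  have hcompl : ∑ i ∈ sᶜ, g i ≤ ∑ i ∈ sᶜ, f i :=
    sum_le_sum fun i hi => h i (mem_compl.mp hi)
  rw [← sum_add_sum_compl s f, ← sum_add_sum_compl s g] at hsum
  exact le_of_add_le_add_right (hsum.le.trans' (add_le_add_right hcompl _))

theorem Fin.sum_filter_val_lt_le_of_sum_eq {N : ℕ} {M : Type*} [AddCommGroup M] [PartialOrder M]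
    [IsOrderedAddMonoid M] (m : ℕ) {f g : Fin N → M} (hsum : ∑ i, f i = ∑ i, g i)
    (hlow : ∀ i : Fin N, (i : ℕ) < m → f i ≤ g i) (hhigh : ∀ i : Fin N, m < (i : ℕ) → g i ≤ f i)
    (k : ℕ) :
    ∑ i ∈ univ.filter (fun i : Fin N => (i : ℕ) < k), f i
      ≤ ∑ i ∈ univ.filter (fun i : Fin N => (i : ℕ) < k), g i := by
  rcases le_or_gt k m with hkm | hmk
  · exact sum_le_sum fun i hi => hlow i ((mem_filter.mp hi).2.trans_le hkm)
  · refine sum_le_sum_of_sum_eq_of_compl_le hsum fun i hi => hhigh i ?_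
    simp only [mem_filter, mem_univ, true_and, not_lt] at hi
    omega

theorem add_mul_le_add_mul_of_lt {q a b c d : ℤ} (hq : 0 ≤ q) (ha : 0 ≤ a) (hb : b < q)
    (hcd : c < d) : b + q * c ≤ a + q * d := by
  nlinarith [mul_le_mul_of_nonneg_left (show c + 1 ≤ d by omega) hq]

theorem add_mul_le_of_neg {q a c : ℤ} (hq : 1 ≤ q) (ha : a < q) (hc : c < 0) :
    a + q * c ≤ c := by
  nlinarith

theorem le_add_mul_of_nonneg {q a c : ℤ} (hq : 1 ≤ q) (ha : 0 ≤ a) (hc : 0 ≤ c) :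
    c ≤ a + q * c := by
  nlinarith

theorem exists_blockwise_strictAnti (m n : ℕ) (hm : 1 ≤ m) (hn : 1 ≤ n) (B D : ℤ) :
    ∃ c : Fin (m + n) → ℤ,
      (∀ i j : Fin (m + n), i < j → (j : ℕ) < m → c j < c i) ∧
      (∀ i j : Fin (m + n), m ≤ (i : ℕ) → i < j → c j < c i) ∧
      (∀ i : Fin (m + n), (i : ℕ) < m → c i ≤ -B) ∧
      (∀ i : Fin (m + n), m ≤ (i : ℕ) → B ≤ c i) ∧
      ∑ i, c i = D := by
  set b : Fin (m + n) → ℤ := fun i => if (i : ℕ) < m then -(i : ℤ) else |B| + m + n - i with hb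
  set K := |B| + |D - ∑ i, b i|
  set t := D - ∑ i, b i + K * m
  set m₀ : Fin (m + n) := ⟨m, by omega⟩
  have ht : 0 ≤ t := by
    have : K ≤ K * m := le_mul_of_one_le_right (by positivity) (by exact_mod_cast hm)
    linarith [neg_abs_le (D - ∑ i, b i), abs_nonneg B]
  have hB : B ≤ |B| := le_abs_self B
  refine ⟨fun i => b i - (if (i : ℕ) < m then K else 0) + (if i = m₀ then t else 0),
    ?_, ?_, ?_, ?_, ?_⟩
  · intro i j hij hjm
    have him : (i : ℕ) < m := Nat.lt_trans hij hjm
    have hi : i ≠ m₀ := Fin.ne_of_val_ne (by simp only [m₀]; omega)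
    have hj : j ≠ m₀ := Fin.ne_of_val_ne (by simp only [m₀]; omega)
    have : (i : ℤ) < j := by exact_mod_cast hij
    simp only [hb, if_pos hjm, if_pos him, hi, hj, if_false]
    linarith
  · intro i j hmi hij
    have hmj : ¬ (j : ℕ) < m := by omega
    have hj : j ≠ m₀ := Fin.ne_of_val_ne (by simp only [m₀]; omega)
    have : (i : ℤ) < j := by exact_mod_cast hij
    simp only [hb, if_neg hmj, if_neg (not_lt.mpr hmi), hj, if_false]
    split_ifs <;> linarith
  · intro i him
    have hi : i ≠ m₀ := Fin.ne_of_val_ne (by simp only [m₀]; omega)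
    have : (0 : ℤ) ≤ i := by positivity
    simp only [hb, if_pos him, hi, if_false]
    linarith [abs_nonneg (D - ∑ i, b i)]
  · intro i hmi
    have : (i : ℤ) < m + n := by exact_mod_cast i.isLt
    simp only [hb, if_neg (not_lt.mpr hmi)]
    split_ifs <;> linarith
  · simp only [sum_add_distrib, sum_sub_distrib, sum_ite_eq', mem_univ, if_true, sum_ite,
      sum_const_zero, add_zero, sum_const, Fin.card_filter_val_lt]
    rw [min_eq_right (Nat.le_add_right m n), nsmul_eq_mul]
    ring

theorem stmt_15_general (m n : ℕ) (hm : 1 ≤ m) (hn : 1 ≤ n) (q : ℕ) (hq : 1 ≤ q)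
    (lam : Fin (m + n) → ℤ)
    (alpha : Fin (m + n) → ℤ)
    (halpha : ∀ i, 0 ≤ alpha i ∧ alpha i < (q : ℤ))
    (hsum : (∑ i, alpha i) ≡ (∑ i, lam i) [ZMOD (q : ℤ)]) :
    ∃ mu : Fin (m + n) → ℤ,
      (∀ i j : Fin (m + n), (i : ℕ) ≤ (j : ℕ) → (j : ℕ) < m → mu j ≤ mu i) ∧
      (∀ i j : Fin (m + n), m ≤ (i : ℕ) → (i : ℕ) ≤ (j : ℕ) → mu j ≤ mu i) ∧
      (∀ k : ℕ, 1 ≤ k → k < m + n →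
        (∑ i ∈ Finset.univ.filter (fun i : Fin (m + n) => (i : ℕ) < k), mu i)
          ≤ (∑ i ∈ Finset.univ.filter (fun i : Fin (m + n) => (i : ℕ) < k), lam i)) ∧
      (∑ i, mu i) = (∑ i, lam i) ∧
      (∀ i, mu i ≡ alpha i [ZMOD (q : ℤ)]) := by
  obtain ⟨D, hD⟩ := hsum.dvd
  set B := ∑ i, |lam i| + 1
  have hlam_abs : ∀ i, |lam i| < B := fun i =>
    Int.lt_add_one_of_le (single_le_sum (fun j _ => abs_nonneg (lam j)) (mem_univ i))
  obtain ⟨c, hc_low, hc_high, hc_neg, hc_pos, hc_sum⟩ := exists_blockwise_strictAnti m n hm hn B D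
  have hq1 : (1 : ℤ) ≤ q := by exact_mod_cast hq
  have hB : 0 < B := (abs_nonneg _).trans_lt (hlam_abs ⟨0, by omega⟩)
  set mu : Fin (m + n) → ℤ := fun i => alpha i + q * c i
  have hmu_sum : ∑ i, mu i = ∑ i, lam i := by
    simp only [mu, sum_add_distrib, ← mul_sum, hc_sum]
    linarith
  have hmu_anti {i j : Fin (m + n)} (hij : (i : ℕ) ≤ j) (hc : i < j → c j < c i) :
      mu j ≤ mu i := by
    obtain rfl | hij := (Fin.le_iff_val_le_val.mpr hij).eq_or_lt
    · exact le_rfl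
    · exact add_mul_le_add_mul_of_lt (by positivity) (halpha i).1 (halpha j).2 (hc hij)
  refine ⟨mu, fun i j hij hjm => hmu_anti hij fun h => hc_low i j h hjm,
    fun i j hmi hij => hmu_anti hij (hc_high i j hmi), fun k _ _ => ?_, hmu_sum, fun i => ?_⟩
  · refine Fin.sum_filter_val_lt_le_of_sum_eq m hmu_sum (fun i hi => ?_) (fun i hi => ?_) k
    · calc mu i ≤ c i := add_mul_le_of_neg hq1 (halpha i).2 (by linarith [hc_neg i hi])
        _ ≤ lam i := by linarith [hc_neg i hi, neg_abs_le (lam i), hlam_abs i]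
    · calc lam i ≤ c i := by linarith [hc_pos i hi.le, le_abs_self (lam i), hlam_abs i]
        _ ≤ mu i := le_add_mul_of_nonneg hq1 (halpha i).1 (by linarith [hc_pos i hi.le])
  · exact Int.modEq_iff_dvd.mpr ⟨-c i, by simp only [mu]; ring⟩

/-- Let `λ` be a dominant weight of `GL(m|n)` (first `m` entries weakly
decreasing, last `n` entries weakly decreasing). Let `q ≥ 1` and `α` with `0 ≤ α i < q`
and `∑ α ≡ ∑ λ (mod q)`. Then there is a dominant weight `μ ⊴ λ` (all partial sums of
`μ` bounded by those of `λ`, equal total sums) with `μ i ≡ α i (mod q)` for all `i`. -/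
theorem stmt_15 (m n : ℕ) (hm : 1 ≤ m) (hn : 1 ≤ n) (q : ℕ) (hq : 1 ≤ q)
    (lam : Fin (m + n) → ℤ)
    (hdom1 : ∀ i j : Fin (m + n), (i : ℕ) ≤ (j : ℕ) → (j : ℕ) < m → lam j ≤ lam i)
    (hdom2 : ∀ i j : Fin (m + n), m ≤ (i : ℕ) → (i : ℕ) ≤ (j : ℕ) → lam j ≤ lam i)
    (alpha : Fin (m + n) → ℤ)
    (halpha : ∀ i, 0 ≤ alpha i ∧ alpha i < (q : ℤ))
    (hsum : (∑ i, alpha i) ≡ (∑ i, lam i) [ZMOD (q : ℤ)]) :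
    ∃ mu : Fin (m + n) → ℤ,
      (∀ i j : Fin (m + n), (i : ℕ) ≤ (j : ℕ) → (j : ℕ) < m → mu j ≤ mu i) ∧
      (∀ i j : Fin (m + n), m ≤ (i : ℕ) → (i : ℕ) ≤ (j : ℕ) → mu j ≤ mu i) ∧
      (∀ k : ℕ, 1 ≤ k → k < m + n →
        (∑ i ∈ Finset.univ.filter (fun i : Fin (m + n) => (i : ℕ) < k), mu i)
          ≤ (∑ i ∈ Finset.univ.filter (fun i : Fin (m + n) => (i : ℕ) < k), lam i)) ∧
      (∑ i, mu i) = (∑ i, lam i) ∧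
      (∀ i, mu i ≡ alpha i [ZMOD (q : ℤ)]) :=
  stmt_15_general m n hm hn q hq lam alpha halpha hsum
end

section
/- Let p be prime, q = p^r. For integers a, b with 0 ≤ a, b ≤ q-1 and a + p^l ≥ q (where l < r), if 0 ≤ b < a + p^l - q then every term C(u+b, a) with u ≡ 0 (mod p^l), max(a-b,0) ≤ u ≤ q-1-b, vanishes mod p; and if b ≥ a + p^l - q then ∑_{u ≡ 0 (mod p^l), max(a-b,0) ≤ u ≤ q-1-b} C(u+b, a) ≡ C(b, a + p^l - q) (mod p). -/
/-!
Splitting Lucas' theorem at `P = p ^ l` gives `C(n, k) ≡ C(n % P, k % P) * C(n / P, k / P) (mod p)`.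
Write `q = P * (Q + 1)`; then `a = c + P * Q` with `c = a + P - q < P`. Every `n = u + b` in the
range has `n / P ≤ Q`, so `C(n / P, Q)` is `1` if `n / P = Q` and `0` otherwise, while for `u` a
multiple of `P` the low factor is `C(b % P, c)`. When `b < c` this low factor already vanishes.
Otherwise exactly one multiple `u₀` of `P` has `(u₀ + b) / P = Q`, and its term is
`C(b % P, c) ≡ C(b, c)`; when `u₀` falls outside the range, `b % P < c` and both sides vanish.
-/

open Finset

namespace Choose

variable {p : ℕ}

theorem mod_pow_div_pow_mod {l i : ℕ} (n : ℕ) (hi : i < l) :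
    n % p ^ l / p ^ i % p = n / p ^ i % p := by
  rw [← Nat.add_sub_cancel' hi.le, pow_add, Nat.mod_mul_right_div_self]
  exact Nat.mod_mod_of_dvd _ (dvd_pow_self p (by omega))

variable [Fact p.Prime]

theorem cast_choose_eq_choose_mod_pow_mul_choose_div_pow (l n k : ℕ) :
    (n.choose k : ZMod p) =
      ((n % p ^ l).choose (k % p ^ l) : ZMod p) * ((n / p ^ l).choose (k / p ^ l) : ZMod p) := by
  have hpl : 0 < p ^ l := pow_pos (Fact.out : p.Prime).pos l
  have hsplit := (ZMod.intCast_eq_intCast_iff _ _ _).mpr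
    (choose_modEq_choose_mul_prod_range_choose (n := n) (k := k) (p := p) l)
  have hlow := (ZMod.intCast_eq_intCast_iff _ _ _).mpr
    (choose_modEq_prod_range_choose (p := p) (Nat.mod_lt n hpl) (Nat.mod_lt k hpl))
  push_cast at hsplit hlow
  rw [hsplit, hlow, mul_comm]
  congr 1
  refine prod_congr rfl fun i hi => ?_
  rw [mod_pow_div_pow_mod n (mem_range.mp hi), mod_pow_div_pow_mod k (mem_range.mp hi)]

theorem cast_choose_eq_choose_mod_pow_of_lt {l b c : ℕ} (hc : c < p ^ l) :
    (b.choose c : ZMod p) = ((b % p ^ l).choose c : ZMod p) := by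
  rw [cast_choose_eq_choose_mod_pow_mul_choose_div_pow l b, Nat.mod_eq_of_lt hc,
    Nat.div_eq_of_lt hc, Nat.choose_zero_right, Nat.cast_one, mul_one]

theorem cast_choose_add_pow_mul {l Q n c : ℕ} (hn : n < p ^ l * (Q + 1)) (hc : c < p ^ l) :
    (n.choose (c + p ^ l * Q) : ZMod p) =
      if n / p ^ l = Q then ((n % p ^ l).choose c : ZMod p) else 0 := by
  have hpl : 0 < p ^ l := pow_pos (Fact.out : p.Prime).pos l
  have hnQ : n / p ^ l < Q + 1 := Nat.div_lt_of_lt_mul hn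
  rw [cast_choose_eq_choose_mod_pow_mul_choose_div_pow l, Nat.add_mul_mod_self_left,
    Nat.mod_eq_of_lt hc, Nat.add_mul_div_left _ _ hpl, Nat.div_eq_of_lt hc, zero_add]
  split_ifs with h
  · rw [h, Nat.choose_self, Nat.cast_one, mul_one]
  · rw [Nat.choose_eq_zero_of_lt (n := n / p ^ l) (by omega), Nat.cast_zero, mul_zero]

variable {l Q b c : ℕ}

theorem cast_choose_pow_mul_add {t : ℕ} (hc : c < p ^ l) (ht : p ^ l * t + b < p ^ l * (Q + 1)) :
    ((p ^ l * t + b).choose (c + p ^ l * Q) : ZMod p) =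
      if t + b / p ^ l = Q then ((b % p ^ l).choose c : ZMod p) else 0 := by
  rw [cast_choose_add_pow_mul ht hc, Nat.mul_add_mod,
    Nat.mul_add_div (pow_pos (Fact.out : p.Prime).pos l)]

theorem prime_dvd_choose_pow_mul_add {t : ℕ} (hbc : b < c) (hc : c < p ^ l)
    (ht : p ^ l * t + b < p ^ l * (Q + 1)) :
    p ∣ (p ^ l * t + b).choose (c + p ^ l * Q) := by
  rw [← ZMod.natCast_eq_zero_iff, cast_choose_pow_mul_add hc ht,
    Nat.mod_eq_of_lt (hbc.trans hc), Nat.choose_eq_zero_of_lt hbc, Nat.cast_zero, ite_self]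

theorem sum_filter_pow_dvd_choose (hc : c < p ^ l) (hb : b < p ^ l * (Q + 1)) :
    ∑ u ∈ (Icc (c + p ^ l * Q - b) (p ^ l * (Q + 1) - 1 - b)).filter (fun u => p ^ l ∣ u),
        ((u + b).choose (c + p ^ l * Q) : ZMod p) = b.choose c := by
  have hP : 0 < p ^ l := pow_pos (Fact.out : p.Prime).pos l
  have hbQ : b / p ^ l ≤ Q := Nat.lt_succ_iff.mp (Nat.div_lt_of_lt_mul hb)
  have hu₀ : p ^ l * (Q - b / p ^ l) + b = p ^ l * Q + b % p ^ l := by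
    have := Nat.div_add_mod b (p ^ l)
    have := Nat.mul_le_mul_left (p ^ l) hbQ
    rw [Nat.mul_sub]
    omega
  rw [mul_add_one] at hb ⊢
  have hterm : ∀ u ∈ (Icc (c + p ^ l * Q - b) (p ^ l * Q + p ^ l - 1 - b)).filter (p ^ l ∣ ·),
      ((u + b).choose (c + p ^ l * Q) : ZMod p) =
        if u = p ^ l * (Q - b / p ^ l) then ((b % p ^ l).choose c : ZMod p) else 0 := by
    rintro _ hu
    obtain ⟨hu, t, rfl⟩ := mem_filter.mp hu
    rw [cast_choose_pow_mul_add hc (by rw [mul_add_one]; simp at hu; omega)]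
    refine if_congr ?_ rfl rfl
    rw [Nat.mul_left_cancel_iff hP]
    -- `omega` does not treat division by a non-literal as an atom
    generalize b / p ^ l = k at hbQ ⊢
    omega
  rw [sum_congr rfl hterm, sum_ite_eq', cast_choose_eq_choose_mod_pow_of_lt (b := b) hc]
  split_ifs with hmem
  · rfl
  · have hlt : b % p ^ l < c := by
      by_contra! hle
      have := Nat.mod_lt b hP
      exact hmem (mem_filter.mpr ⟨mem_Icc.mpr ⟨by omega, by omega⟩, dvd_mul_right _ _⟩)
    rw [Nat.choose_eq_zero_of_lt hlt, Nat.cast_zero]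

end Choose

open Choose

/-- Let `p` be prime, `q = p^r`, `l < r`, `a, b ≤ q-1`, `a + p^l ≥ q`.
If `b < a + p^l - q` then every term `C(u+b, a)` with `p^l ∣ u`,
`max(a-b,0) ≤ u ≤ q-1-b`, vanishes mod `p`; and if `b ≥ a + p^l - q` then
`∑_{p^l ∣ u, max(a-b,0) ≤ u ≤ q-1-b} C(u+b, a) ≡ C(b, a + p^l - q) (mod p)`. -/
theorem stmt_16 (p r l : ℕ) (hp : p.Prime) (hl : l < r) (q : ℕ) (hq : q = p ^ r)
    (a b : ℕ) (ha : a ≤ q - 1) (hb : b ≤ q - 1) (haq : q ≤ a + p ^ l) :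
    (b < a + p ^ l - q →
      ∀ u : ℕ, p ^ l ∣ u → a - b ≤ u → u ≤ q - 1 - b → p ∣ (u + b).choose a) ∧
    (a + p ^ l - q ≤ b →
      (∑ u ∈ (Finset.Icc (a - b) (q - 1 - b)).filter (fun u => p ^ l ∣ u),
          ((u + b).choose a : ℤ))
        ≡ (b.choose (a + p ^ l - q) : ℤ) [ZMOD (p : ℤ)]) := by
  have : Fact p.Prime := ⟨hp⟩
  have hP : 0 < p ^ l := pow_pos hp.pos l
  obtain ⟨Q, hPQ⟩ : ∃ Q, q = p ^ l * (Q + 1) := ⟨p ^ (r - l) - 1, by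
    rw [Nat.sub_add_cancel (Nat.one_le_pow _ _ hp.pos), hq, ← pow_add, Nat.add_sub_cancel' hl.le]⟩
  have hqN : q = p ^ l * Q + p ^ l := by rw [hPQ, mul_add_one]
  obtain ⟨c, hc, rfl⟩ : ∃ c < p ^ l, a = c + p ^ l * Q := ⟨a + p ^ l - q, by omega, by omega⟩
  rw [show c + p ^ l * Q + p ^ l - q = c by omega]
  constructor
  · rintro hbc u ⟨t, rfl⟩ - hu
    exact prime_dvd_choose_pow_mul_add hbc hc (by omega)
  · rintro -
    rw [← ZMod.intCast_eq_intCast_iff, hPQ]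
    push_cast
    exact sum_filter_pow_dvd_choose hc (by omega)
end

section
/- Let p be prime, q = p^r, l < r, and a an integer with 0 ≤ a < q and a + p^l < q. Then for every b with 0 ≤ b ≤ q-1: C(b, a + p^l) + ∑_{u ≡ 0 (mod p^l), max(a-b,0) ≤ u ≤ q-1-b} C(u+b, a) ≡ C(b + w p^l, a + p^l) (mod p), where w is the smallest nonnegative integer with b + w p^l ≥ q; consequently the sum is ≡ -C(b, a+p^l) (mod p) since C(b + w p^l, a + p^l) ≡ 0 (mod p). -/
/-!
Over `𝔽_p` one has `(1 + X)^(p^n) = 1 + X^(p^n)`, hence `C(y + p^n, k) ≡ C(y, k) + C(y, k - p^n)`.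
Applied `w` times with step `p^l`, this telescopes `C(b + w p^l, a + p^l)` into `C(b, a + p^l)` plus
`∑_{j < w} C(b + j p^l, a)`, and the `u = j p^l` with `j < w` are exactly the multiples of `p^l` with
`u + b < q`. Finally `C(b + w p^l, a + p^l) ≡ 0` because `b + w p^l = q + y` with `y < p^l ≤ a + p^l < q`.
-/

open Finset Polynomial

section
variable {p : ℕ} [Fact p.Prime]

theorem cast_choose_add_prime_pow (y n k : ℕ) :
    ((y + p ^ n).choose k : ZMod p) =
      y.choose k + if p ^ n ≤ k then (y.choose (k - p ^ n) : ZMod p) else 0 := by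
  have h : (X + 1 : (ZMod p)[X]) ^ (y + p ^ n) = (X + 1) ^ y + X ^ p ^ n * (X + 1) ^ y := by
    rw [pow_add, add_pow_char_pow, one_pow]
    ring
  simpa only [coeff_add, coeff_X_pow_mul', coeff_X_add_one_pow] using congrArg (coeff · k) h

theorem cast_choose_add_prime_pow_add_prime_pow (y n k : ℕ) :
    ((y + p ^ n).choose (k + p ^ n) : ZMod p) = y.choose (k + p ^ n) + y.choose k := by
  simp [cast_choose_add_prime_pow]

theorem cast_choose_eq_zero_of_prime_pow_le {n N k : ℕ} (hN : p ^ n ≤ N) (hk : N - p ^ n < k)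
    (hkn : k < p ^ n) : (N.choose k : ZMod p) = 0 := by
  obtain ⟨y, rfl⟩ := Nat.exists_eq_add_of_le' hN
  rw [cast_choose_add_prime_pow, Nat.choose_eq_zero_of_lt (by omega), if_neg (by omega)]
  simp

theorem cast_choose_add_mul_prime_pow_add_prime_pow (b a n w : ℕ) :
    ((b + w * p ^ n).choose (a + p ^ n) : ZMod p) =
      b.choose (a + p ^ n) + ∑ j ∈ range w, ((b + j * p ^ n).choose a : ZMod p) := by
  induction w with
  | zero => simp
  | succ w ih =>
    rw [add_one_mul, ← add_assoc, cast_choose_add_prime_pow_add_prime_pow, ih, sum_range_succ]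
    ring

end

theorem sum_filter_dvd_Icc_choose_eq_sum_range {a b d q w : ℕ} (hd : 0 < d) (hb : b < q)
    (hw : q ≤ b + w * d) (hwmin : ∀ j < w, b + j * d < q) :
    ∑ u ∈ (Icc (a - b) (q - 1 - b)).filter (d ∣ ·), (u + b).choose a =
      ∑ j ∈ range w, (b + j * d).choose a := by
  have hIcc : ∑ u ∈ (Icc (a - b) (q - 1 - b)).filter (d ∣ ·), (u + b).choose a =
      ∑ u ∈ (range (q - b)).filter (d ∣ ·), (u + b).choose a := by
    refine sum_subset (fun u hu => ?_) (fun u hu hu' => Nat.choose_eq_zero_of_lt ?_)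
    · simp only [mem_filter, mem_Icc, mem_range] at hu ⊢
      exact ⟨by omega, hu.2⟩
    · simp only [mem_filter, mem_Icc, mem_range, not_and] at hu hu'
      by_contra! h
      exact hu' ⟨by omega, by omega⟩ hu.2
  have hmul : (range (q - b)).filter (d ∣ ·) = (range w).map ⟨(· * d), mul_left_injective₀ hd.ne'⟩ := by
    ext u
    simp only [mem_filter, mem_range, mem_map, Function.Embedding.coeFn_mk]
    constructor
    · rintro ⟨hu, c, rfl⟩
      refine ⟨c, ?_, mul_comm _ _⟩
      by_contra! hc
      have := Nat.mul_le_mul_right d hc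
      rw [mul_comm] at hu
      omega
    · rintro ⟨j, hj, rfl⟩
      exact ⟨by have := hwmin j hj; omega, dvd_mul_left _ _⟩
  rw [hIcc, hmul, sum_map]
  exact sum_congr rfl fun j _ => by simp [add_comm]

theorem stmt_17_general (p r l : ℕ) (hp : p.Prime) (q : ℕ) (hq : q = p ^ r)
    (a : ℕ) (hapl : a + p ^ l < q) (b : ℕ) (hb : b ≤ q - 1)
    (w : ℕ) (hw : q ≤ b + w * p ^ l) (hwmin : ∀ w' : ℕ, w' < w → b + w' * p ^ l < q) :
    ((b.choose (a + p ^ l) : ℤ) +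
        ∑ u ∈ (Finset.Icc (a - b) (q - 1 - b)).filter (fun u => p ^ l ∣ u),
          ((u + b).choose a : ℤ))
      ≡ ((b + w * p ^ l).choose (a + p ^ l) : ℤ) [ZMOD (p : ℤ)] ∧
    (∑ u ∈ (Finset.Icc (a - b) (q - 1 - b)).filter (fun u => p ^ l ∣ u),
        ((u + b).choose a : ℤ))
      ≡ -(b.choose (a + p ^ l) : ℤ) [ZMOD (p : ℤ)] := by
  have := Fact.mk hp
  have hpl : 0 < p ^ l := pow_pos hp.pos l
  obtain ⟨v, rfl⟩ : ∃ v, w = v + 1 := Nat.exists_eq_succ_of_ne_zero (by rintro rfl; omega)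
  have hsum : ∑ u ∈ (Icc (a - b) (q - 1 - b)).filter (fun u => p ^ l ∣ u), ((u + b).choose a : ℤ) =
      ∑ j ∈ range (v + 1), ((b + j * p ^ l).choose a : ℤ) := by
    exact_mod_cast sum_filter_dvd_Icc_choose_eq_sum_range hpl (by omega) hw hwmin
  have hstep := cast_choose_add_mul_prime_pow_add_prime_pow (p := p) b a l (v + 1)
  have hvan : ((b + (v + 1) * p ^ l).choose (a + p ^ l) : ZMod p) = 0 := by
    have := hwmin v (by omega)
    rw [add_one_mul] at hw ⊢
    exact cast_choose_eq_zero_of_prime_pow_le (n := r) (by omega) (by omega) (by omega)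
  rw [hsum]
  simp only [← ZMod.intCast_eq_intCast_iff]
  push_cast
  refine ⟨hstep.symm, ?_⟩
  rw [hvan] at hstep
  linear_combination -hstep

/-- Let `p` be prime, `q = p^r`, `l < r`, `0 ≤ a < q` with `a + p^l < q`.
For every `b ≤ q-1`, with `w` the smallest nonnegative integer with `b + w·p^l ≥ q`:
`C(b, a+p^l) + ∑_{p^l ∣ u, max(a-b,0) ≤ u ≤ q-1-b} C(u+b, a) ≡ C(b + w p^l, a + p^l) (mod p)`,
and consequently the sum is `≡ -C(b, a+p^l) (mod p)`. -/
theorem stmt_17 (p r l : ℕ) (hp : p.Prime) (hl : l < r) (q : ℕ) (hq : q = p ^ r)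
    (a : ℕ) (ha : a < q) (hapl : a + p ^ l < q) (b : ℕ) (hb : b ≤ q - 1)
    (w : ℕ) (hw : q ≤ b + w * p ^ l) (hwmin : ∀ w' : ℕ, w' < w → b + w' * p ^ l < q) :
    ((b.choose (a + p ^ l) : ℤ) +
        ∑ u ∈ (Finset.Icc (a - b) (q - 1 - b)).filter (fun u => p ^ l ∣ u),
          ((u + b).choose a : ℤ))
      ≡ ((b + w * p ^ l).choose (a + p ^ l) : ℤ) [ZMOD (p : ℤ)] ∧
    (∑ u ∈ (Finset.Icc (a - b) (q - 1 - b)).filter (fun u => p ^ l ∣ u),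
        ((u + b).choose a : ℤ))
      ≡ -(b.choose (a + p ^ l) : ℤ) [ZMOD (p : ℤ)] :=
  stmt_17_general p r l hp q hq a hapl b hb w hw hwmin
end

section
/- In the polynomial ring K[e_1, ..., e_N] over a field K of characteristic zero, fix an integer l and let h = e_1 + ... + e_N - l. If a polynomial f ∈ K[e_1, ..., e_N] vanishes at every integer point (λ_1, ..., λ_N) ∈ ℤ^N satisfying λ_1 ≥ λ_2 ≥ ... ≥ λ_{N-1}, λ_1 + ... + λ_N = l (no condition relating λ_{N-1} and λ_N), then h divides f. -/
open MvPolynomial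

/-- A polynomial vanishing at all weakly decreasing integer tuples is zero. -/
lemma aux_zero_18 (K : Type*) [Field K] [CharZero K] :
    ∀ (n : ℕ) (r : MvPolynomial (Fin n) K),
      (∀ μ : Fin n → ℤ, (∀ i j : Fin n, i ≤ j → μ j ≤ μ i) →
        MvPolynomial.eval (fun i => (μ i : K)) r = 0) → r = 0 := by
  intro n
  induction n with
  | zero =>
    intro r hr
    apply MvPolynomial.funext
    intro x
    have hx : x = fun i => (((fun _ : Fin 0 => (0:ℤ)) i : ℤ) : K) := by
      funext i; exact i.elim0
    rw [map_zero, hx]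
    exact hr _ (fun i => i.elim0)
  | succ n ih =>
    intro r hr
    set F := MvPolynomial.finSuccEquiv K n r with hF
    have hF0 : F = 0 := by
      apply Polynomial.ext
      intro k
      rw [Polynomial.coeff_zero]
      apply ih
      intro μ hμ
      set B : ℤ := ∑ i, |μ i| with hB
      have hμB : ∀ i, μ i ≤ B := by
        intro i
        calc μ i ≤ |μ i| := le_abs_self _
        _ ≤ B := Finset.single_le_sum (fun j _ => abs_nonneg (μ j)) (Finset.mem_univ i)
      set φ := MvPolynomial.eval (fun i => (μ i : K)) with hφ
      have hmap : F.map φ = 0 := by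
        apply Polynomial.eq_zero_of_infinite_isRoot
        apply Set.Infinite.mono (s := (fun t : ℤ => (t : K)) '' Set.Ici B)
        · rintro x ⟨t, ht, rfl⟩
          have hcons : ∀ i j : Fin (n+1), i ≤ j →
              (Fin.cons t μ : Fin (n+1) → ℤ) j ≤ (Fin.cons t μ : Fin (n+1) → ℤ) i := by
            intro i j hij
            induction i using Fin.cases with
            | zero =>
              induction j using Fin.cases with
              | zero => exact le_refl _
              | succ j' => simpa using (hμB j').trans ht
            | succ i' =>
              induction j using Fin.cases with
              | zero => exact absurd (Fin.le_zero_iff.mp hij) (Fin.succ_ne_zero i')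
              | succ j' =>
                have : i' ≤ j' := by rwa [Fin.succ_le_succ_iff] at hij
                simpa using hμ i' j' this
          have := hr (Fin.cons t μ) hcons
          have hptfam : (fun i => ((Fin.cons t μ : Fin (n+1) → ℤ) i : K))
              = Fin.cons (t : K) (fun i => (μ i : K)) := by
            funext i
            induction i using Fin.cases with
            | zero => simp
            | succ i' => simp
          rw [hptfam] at this
          rw [MvPolynomial.eval_eq_eval_mv_eval'] at this
          exact this
        · apply Set.Infinite.image
          · exact fun a _ b _ hab => Int.cast_injective hab
          · exact Set.Ici_infinite B
      have := congrArg (fun p => Polynomial.coeff p k) hmap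
      simpa [Polynomial.coeff_map] using this
    have h2 := congrArg (MvPolynomial.finSuccEquiv K n).symm hF0
    rw [hF] at h2
    simpa using h2

/-- In `K[e_1, ..., e_N]` over a field `K` of characteristic zero, fix an
integer `l` and let `h = e_1 + ... + e_N - l`. If `f` vanishes at every integer point
`(λ_1, ..., λ_N)` with `λ_1 ≥ ... ≥ λ_{N-1}` and `∑ λ_i = l` (no condition involving
`λ_N` beyond the sum), then `h` divides `f`. -/
theorem stmt_18 (K : Type*) [Field K] [CharZero K] (N : ℕ) (hN : 2 ≤ N) (l : ℤ)
    (f : MvPolynomial (Fin N) K)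
    (hf : ∀ lam : Fin N → ℤ,
      (∀ i j : Fin N, (i : ℕ) ≤ (j : ℕ) → (j : ℕ) < N - 1 → lam j ≤ lam i) →
      (∑ i, lam i) = l →
      MvPolynomial.eval (fun i => (lam i : K)) f = 0) :
    ((∑ i, MvPolynomial.X i) - MvPolynomial.C (l : K)) ∣ f := by
  obtain ⟨n, rfl⟩ : ∃ n, N = n + 1 := ⟨N - 1, (Nat.succ_pred_eq_of_pos (by omega)).symm⟩
  set σ : Fin (n+1) ≃ Fin (n+1) :=
    (finSuccEquiv' (Fin.last n)).trans (_root_.finSuccEquiv n).symm with hσ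
  have hσ_last : σ (Fin.last n) = 0 := by
    simp [hσ, finSuccEquiv'_at]
  have hσ_cast : ∀ i : Fin n, σ (Fin.castSucc i) = i.succ := by
    intro i
    have : finSuccEquiv' (Fin.last n) (Fin.castSucc i) = some i := by
      rw [← Fin.succAbove_last]
      exact finSuccEquiv'_succAbove (Fin.last n) i
    simp [hσ, this]
  set e := MvPolynomial.renameEquiv K σ with he
  -- it suffices to prove divisibility after renaming
  suffices hdvd : ((∑ i, MvPolynomial.X i) - MvPolynomial.C ((l:ℤ) : K)) ∣ e f by
    have h1 : e ((∑ i, MvPolynomial.X i) - MvPolynomial.C ((l:ℤ) : K))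
        = (∑ i, MvPolynomial.X i) - MvPolynomial.C ((l:ℤ) : K) := by
      rw [map_sub, map_sum]
      simp only [he, MvPolynomial.renameEquiv_apply, MvPolynomial.rename_X,
        MvPolynomial.rename_C]
      rw [Equiv.sum_comp σ (fun i => MvPolynomial.X i)]
    rw [← h1] at hdvd
    exact (map_dvd_iff e).mp hdvd
  set g := e f with hg
  set a : MvPolynomial (Fin n) K :=
    MvPolynomial.C ((l:ℤ) : K) - ∑ i, MvPolynomial.X i with ha
  set F := MvPolynomial.finSuccEquiv K n g with hFdef
  have hhequiv : MvPolynomial.finSuccEquiv K n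
      ((∑ i, MvPolynomial.X i) - MvPolynomial.C ((l:ℤ) : K))
      = Polynomial.X - Polynomial.C a := by
    have hC : (MvPolynomial.finSuccEquiv K n) (MvPolynomial.C ((l:ℤ):K))
        = Polynomial.C (MvPolynomial.C ((l:ℤ):K)) := by
      simp [MvPolynomial.finSuccEquiv_apply]
    rw [map_sub, map_sum, Fin.sum_univ_succ, hC]
    simp only [MvPolynomial.finSuccEquiv_X_zero, MvPolynomial.finSuccEquiv_X_succ]
    rw [ha, map_sub, map_sum]
    ring
  -- reduce to showing F.eval a = 0
  have hroot : Polynomial.eval a F = 0 := by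
    apply aux_zero_18 K n
    intro μ hμ
    set t : ℤ := l - ∑ i, μ i with ht
    set lam : Fin (n+1) → ℤ := Fin.snoc μ t with hlam
    have hlam_dec : ∀ i j : Fin (n+1), (i : ℕ) ≤ (j : ℕ) → (j : ℕ) < (n+1) - 1 → lam j ≤ lam i := by
      intro i j hij hj
      have hj' : (j : ℕ) < n := by simpa using hj
      have hi' : (i : ℕ) < n := lt_of_le_of_lt hij hj'
      have hjc : j = Fin.castSucc ⟨(j : ℕ), hj'⟩ := Fin.ext rfl
      have hic : i = Fin.castSucc ⟨(i : ℕ), hi'⟩ := Fin.ext rfl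
      rw [hjc, hic, hlam, Fin.snoc_castSucc, Fin.snoc_castSucc]
      exact hμ ⟨(i:ℕ), hi'⟩ ⟨(j:ℕ), hj'⟩ hij
    have hlam_sum : (∑ i, lam i) = l := by
      rw [hlam, Fin.sum_univ_castSucc]
      simp [Fin.snoc_castSucc, Fin.snoc_last, ht]
    have h0 := hf lam hlam_dec hlam_sum
    -- rewrite h0 as eval of g at the cons point
    have hcomp : (fun i => (lam i : K)) = (Fin.cons ((t:ℤ) : K) (fun i => (μ i : K))) ∘ σ := by
      funext i
      induction i using Fin.lastCases with
      | last => simp [hlam, Fin.snoc_last, hσ_last]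
      | cast i' => simp [hlam, Fin.snoc_castSucc, hσ_cast i']
    rw [hcomp, ← MvPolynomial.eval_rename] at h0
    rw [show MvPolynomial.rename σ f = g from rfl] at h0
    rw [MvPolynomial.eval_eq_eval_mv_eval'] at h0
    -- now commute eval with Polynomial.eval
    set φ := MvPolynomial.eval (fun i => (μ i : K)) with hφ
    have haφ : φ a = ((t:ℤ) : K) := by
      rw [ha, hφ, ht]
      push_cast
      simp
    calc φ (Polynomial.eval a F)
        = Polynomial.eval (φ a) (F.map φ) := by
          rw [Polynomial.eval_map, Polynomial.eval₂_hom]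
      _ = Polynomial.eval ((t:ℤ):K) (F.map φ) := by rw [haφ]
      _ = 0 := h0
  have : (Polynomial.X - Polynomial.C a) ∣ F := Polynomial.dvd_iff_isRoot.mpr hroot
  rw [← hhequiv, hFdef] at this
  exact (map_dvd_iff (MvPolynomial.finSuccEquiv K n)).mp this
end

section
/- Let p be prime, q = p^r, and for 0 ≤ t ≤ q-1 define the polynomial h_t(x) = ∑_{k=t}^{q-1} (-1)^{k-t} C(k,t) C(x,k) ∈ 𝔽_p[x], where C(x,k) = x(x-1)⋯(x-k+1)/k!. Then the polynomials {h_t(x) : 0 ≤ t ≤ q-1}, viewed as functions on ℤ/qℤ via evaluation at integers, form a complete system of orthogonal idempotents: h_s(m) h_t(m) ≡ δ_{s,t} h_t(m) (mod p) for all integers m, and ∑_{t=0}^{q-1} h_t(m) ≡ 1 (mod p) for all integers m. -/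
/-!
For `k < p ^ r`, Vandermonde's identity gives `C(m + p^r, k) ≡ C(m, k) (mod p)`, because `p`
divides `C(p^r, j)` for `0 < j < p^r`; so mod `p`, `h_t(m) = h_t(n)` with `n = m mod q ∈ [0, q)`.
At such a natural number `n`, the identity `C(k, t) C(n, k) = C(n, t) C(n - t, k - t)` turns
`h_t(n)` into `C(n, t)` times an alternating sum of `C(n - t, ·)`, which vanishes unless `n = t`.
Hence `h_t(m) ≡ [m ≡ t (mod q)]`, and both claims follow.
-/

open Finset

theorem Int.ringChoose_add_prime_pow_modEq {p : ℕ} (hp : p.Prime) {r k : ℕ} (hk : k < p ^ r)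
    (m : ℤ) : Ring.choose (m + (p ^ r : ℕ)) k ≡ Ring.choose m k [ZMOD p] := by
  rw [← ZMod.intCast_eq_intCast_iff, Ring.add_choose_eq k (Commute.all _ _), Int.cast_sum,
    sum_eq_single (k, 0) _ (by simp)]
  · simp
  rintro ⟨i, j⟩ hij hne
  rw [HasAntidiagonal.mem_antidiagonal] at hij
  have hj : j ≠ 0 := by rintro rfl; simp_all
  have hdvd : p ∣ (p ^ r).choose j := hp.dvd_choose_pow hj (by omega)
  rw [Ring.choose_natCast, Int.cast_mul, Int.cast_natCast,
    (ZMod.natCast_eq_zero_iff _ _).mpr hdvd, mul_zero]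

theorem Int.ringChoose_modEq_ringChoose_emod_prime_pow {p : ℕ} (hp : p.Prime) {r k : ℕ}
    (hk : k < p ^ r) (m : ℤ) : Ring.choose m k ≡ Ring.choose (m % (p ^ r : ℕ)) k [ZMOD p] := by
  have hper :
      Function.Periodic (fun m : ℤ => ((Ring.choose m k : ℤ) : ZMod p)) (p ^ r : ℕ) :=
    fun m => (ZMod.intCast_eq_intCast_iff _ _ _).mpr (Int.ringChoose_add_prime_pow_modEq hp hk m)
  rw [← ZMod.intCast_eq_intCast_iff, Int.emod_def, mul_comm]
  exact (hper.sub_int_mul_eq _).symm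

theorem Int.sum_Icc_neg_one_pow_mul_choose_mul_choose {t n N : ℕ} (hn : n ≤ N) :
    ∑ k ∈ Icc t N, (-1 : ℤ) ^ (k - t) * k.choose t * n.choose k = if n = t then 1 else 0 := by
  rw [← sum_subset (Icc_subset_Icc_right hn) fun k hk hk' => by
    simp_all [Nat.choose_eq_zero_of_lt (show n < k by simp at hk hk'; omega)]]
  rcases lt_or_ge n t with hnt | htn
  · simp [Icc_eq_empty_of_lt hnt, hnt.ne]
  calc ∑ k ∈ Icc t n, (-1 : ℤ) ^ (k - t) * k.choose t * n.choose k
      = ∑ j ∈ Finset.range (n - t + 1), (n.choose t : ℤ) * ((-1) ^ j * (n - t).choose j) := by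
        rw [← Ico_add_one_right_eq_Icc, sum_Ico_eq_sum_range, show n + 1 - t = n - t + 1 by omega]
        refine sum_congr rfl fun j _ => ?_
        have hmul :
            (n.choose (t + j) * (t + j).choose t : ℤ) = n.choose t * (n - t).choose j := by
          exact_mod_cast Nat.add_sub_cancel_left t j ▸ Nat.choose_mul (n := n) le_self_add
        rw [Nat.add_sub_cancel_left]
        linear_combination (-1 : ℤ) ^ j * hmul
    _ = if n = t then 1 else 0 := by
        rw [← mul_sum, Int.alternating_sum_range_choose]
        rcases htn.eq_or_lt with rfl | hlt
        · simp
        · simp [hlt.ne', Nat.sub_ne_zero_of_lt hlt]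

theorem Int.toNat_emod_lt {n : ℕ} (hn : 0 < n) (m : ℤ) : (m % n).toNat < n := by
  have := Int.emod_lt_of_pos m (Int.natCast_pos.mpr hn)
  omega

theorem Int.sum_Icc_neg_one_pow_mul_choose_mul_ringChoose_modEq {p : ℕ} (hp : p.Prime)
    (r t : ℕ) (m : ℤ) :
    ∑ k ∈ Icc t (p ^ r - 1), (-1) ^ (k - t) * (k.choose t : ℤ) * Ring.choose m k ≡
      if (m % (p ^ r : ℕ)).toNat = t then 1 else 0 [ZMOD p] := by
  have hpr : 0 < p ^ r := pow_pos hp.pos r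
  have hn : ((m % (p ^ r : ℕ)).toNat : ℤ) = m % (p ^ r : ℕ) :=
    Int.toNat_of_nonneg (Int.emod_nonneg _ (by omega))
  rw [← Int.sum_Icc_neg_one_pow_mul_choose_mul_choose
    (Nat.le_sub_one_of_lt (Int.toNat_emod_lt hpr m))]
  refine Int.ModEq.sum fun k hk => Int.ModEq.mul_left _ ?_
  rw [← Ring.choose_natCast, hn]
  exact Int.ringChoose_modEq_ringChoose_emod_prime_pow hp (by simp at hk; omega) m

theorem stmt_19_general (p r : ℕ) (hp : p.Prime) (q : ℕ) (hq : q = p ^ r)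
    (h : ℕ → ℤ → ℤ)
    (hdef : ∀ t : ℕ, ∀ m : ℤ,
      h t m = ∑ k ∈ Finset.Icc t (q - 1),
        (-1) ^ (k - t) * (k.choose t : ℤ) * Ring.choose m k) :
    (∀ s t : ℕ, s ≤ q - 1 → t ≤ q - 1 → ∀ m : ℤ,
      h s m * h t m ≡ (if s = t then h t m else 0) [ZMOD (p : ℤ)]) ∧
    (∀ m : ℤ, (∑ t ∈ Finset.range q, h t m) ≡ 1 [ZMOD (p : ℤ)]) := by
  subst hq
  have hval (t : ℕ) (m : ℤ) :
      (h t m : ZMod p) = if (m % (p ^ r : ℕ)).toNat = t then 1 else 0 := by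
    rw [hdef, (ZMod.intCast_eq_intCast_iff _ _ _).mpr
      (Int.sum_Icc_neg_one_pow_mul_choose_mul_ringChoose_modEq hp r t m)]
    split_ifs <;> simp
  refine ⟨fun s t _ _ m => ?_, fun m => ?_⟩
  · rw [← ZMod.intCast_eq_intCast_iff, Int.cast_mul, apply_ite Int.cast, hval, hval]
    split_ifs <;> simp_all
  · rw [← ZMod.intCast_eq_intCast_iff, Int.cast_sum, sum_congr rfl fun t _ => hval t m,
      sum_ite_eq, if_pos (mem_range.mpr (Int.toNat_emod_lt (pow_pos hp.pos r) m)), Int.cast_one]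

/-- Let `p` be prime, `q = p^r` with `r ≥ 1`, and for `0 ≤ t ≤ q-1` let
`h_t(x) = ∑_{k=t}^{q-1} (-1)^{k-t} C(k,t) C(x,k)` (generalized binomial `C(x,k)`).
Then, evaluated at integers, the `h_t` form a complete system of orthogonal idempotents
mod `p`: `h_s(m) h_t(m) ≡ δ_{s,t} h_t(m) (mod p)` and `∑_{t=0}^{q-1} h_t(m) ≡ 1 (mod p)`. -/
theorem stmt_19 (p r : ℕ) (hp : p.Prime) (hr : 1 ≤ r) (q : ℕ) (hq : q = p ^ r)
    (h : ℕ → ℤ → ℤ)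
    (hdef : ∀ t : ℕ, ∀ m : ℤ,
      h t m = ∑ k ∈ Finset.Icc t (q - 1),
        (-1) ^ (k - t) * (k.choose t : ℤ) * Ring.choose m k) :
    (∀ s t : ℕ, s ≤ q - 1 → t ≤ q - 1 → ∀ m : ℤ,
      h s m * h t m ≡ (if s = t then h t m else 0) [ZMOD (p : ℤ)]) ∧
    (∀ m : ℤ, (∑ t ∈ Finset.range q, h t m) ≡ 1 [ZMOD (p : ℤ)]) :=
  stmt_19_general p r hp q hq h hdef
end
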